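/- Let S be a finite nonempty index set, and for each i ∈ S let f_i : ℝ^d → ℝ be C² with minimizer x_i* (∇f_i(x_i*) = 0) and Hessian bounded below by λ_i > 0 along segments from x_i*. Let x_S* = (1/|S|) Σ_i x_i* be the centroid of the minimizers. Then the average objective F(x) = (1/|S|) Σ_i f_i(x) satisfies F(x) ≥ (1/|S|) Σ_i [ f_i(x_i*) + (λ_i/2)·(‖x_i* − x_S*‖ − ‖x − x_S*‖)² ] for all x in the common domain of validity. -/

import Mathlib

open RealInnerProductSpace

/-- Strong convexity along a segment gives the quadratic lower bound. -/
lemma strong_lower_bound {E : Type*} [NormedAddCommGroup E] [NormedSpace ℝ E]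
    (f : E → ℝ) (a x : E) (lam : ℝ)
    (hf : ContDiff ℝ 2 f) (hg : fderiv ℝ f a = 0)
    (hH : ∀ z ∈ segment ℝ a x, lam * ‖x - a‖ ^ 2 ≤ fderiv ℝ (fderiv ℝ f) z (x - a) (x - a)) :
    f a + lam / 2 * ‖x - a‖ ^ 2 ≤ f x := by
  set v := x - a with hv
  set c : ℝ → E := fun t => a + t • v with hc
  have hcd : ∀ t : ℝ, HasDerivAt c v t := by
    intro t
    have h1 : HasDerivAt (fun t : ℝ => t • v) ((1 : ℝ) • v) t :=
      (hasDerivAt_id t).smul_const v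
    simpa [hc] using h1.const_add a
  have hseg : ∀ t ∈ Set.Icc (0:ℝ) 1, c t ∈ segment ℝ a x := by
    intro t ht
    rw [segment_eq_image' ℝ a x]
    exact ⟨t, ht, rfl⟩
  have hdf : Differentiable ℝ f := hf.differentiable (by norm_num)
  have hD : Differentiable ℝ (fderiv ℝ f) :=
    (hf.fderiv_right (m := 1) (by norm_num)).differentiable (by norm_num)
  have hφ : ∀ t : ℝ, HasDerivAt (fun t => f (c t)) (fderiv ℝ f (c t) v) t := by
    intro t
    exact ((hdf (c t)).hasFDerivAt).comp_hasDerivAt t (hcd t)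
  have hψ : ∀ t : ℝ, HasDerivAt (fun t => fderiv ℝ f (c t) v)
      (fderiv ℝ (fderiv ℝ f) (c t) v v) t := by
    intro t
    have h1 : HasDerivAt (fun t => fderiv ℝ f (c t)) (fderiv ℝ (fderiv ℝ f) (c t) v) t :=
      ((hD (c t)).hasFDerivAt).comp_hasDerivAt t (hcd t)
    have h2 := (ContinuousLinearMap.apply ℝ ℝ v).hasFDerivAt.comp_hasDerivAt t h1
    exact h2
  -- step 1 : g t := fderiv f (c t) v - lam ‖v‖² t is nonneg on [0,1]
  set g : ℝ → ℝ := fun t => fderiv ℝ f (c t) v - lam * ‖v‖ ^ 2 * t with hgdef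
  have hgder : ∀ t : ℝ, HasDerivAt g (fderiv ℝ (fderiv ℝ f) (c t) v v - lam * ‖v‖ ^ 2) t := by
    intro t
    have := (hψ t).sub (((hasDerivAt_id t).const_mul (lam * ‖v‖ ^ 2)))
    rw [mul_one] at this
    exact this
  have hg0 : g 0 = 0 := by
    have hc0 : c 0 = a := by simp [hc]
    simp [hgdef, hc0, hg]
  have hgmono : MonotoneOn g (Set.Icc (0:ℝ) 1) := by
    apply monotoneOn_of_deriv_nonneg (convex_Icc 0 1)
    · exact (Differentiable.continuous (fun t => (hgder t).differentiableAt)).continuousOn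
    · exact fun t _ => ((hgder t).differentiableAt).differentiableWithinAt
    · intro t ht
      rw [(hgder t).deriv]
      have ht' : t ∈ Set.Icc (0:ℝ) 1 := by
        rw [interior_Icc] at ht; exact Set.mem_Icc_of_Ioo ht
      have := hH (c t) (hseg t ht')
      linarith
  have hgnonneg : ∀ t ∈ Set.Icc (0:ℝ) 1, 0 ≤ g t := by
    intro t ht
    have := hgmono (Set.left_mem_Icc.mpr zero_le_one) ht ht.1
    simpa [hg0] using this
  -- step 2 : h t := f (c t) - lam ‖v‖²/2 t²
  set h : ℝ → ℝ := fun t => f (c t) - lam * ‖v‖ ^ 2 / 2 * t ^ 2 with hhdef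
  have hhder : ∀ t : ℝ, HasDerivAt h (g t) t := by
    intro t
    have h1 := (hφ t).sub (((hasDerivAt_pow 2 t)).const_mul (lam * ‖v‖ ^ 2 / 2))
    have h2 : HasDerivAt h _ t := h1
    convert h2 using 1
    show (fderiv ℝ f (c t)) v - lam * ‖v‖ ^ 2 * t = _
    push_cast
    ring
  have hhmono : MonotoneOn h (Set.Icc (0:ℝ) 1) := by
    apply monotoneOn_of_deriv_nonneg (convex_Icc 0 1)
    · exact (Differentiable.continuous (fun t => (hhder t).differentiableAt)).continuousOn
    · exact fun t _ => ((hhder t).differentiableAt).differentiableWithinAt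
    · intro t ht
      rw [(hhder t).deriv]
      have ht' : t ∈ Set.Icc (0:ℝ) 1 := by
        rw [interior_Icc] at ht; exact Set.mem_Icc_of_Ioo ht
      exact hgnonneg t ht'
  have key := hhmono (Set.left_mem_Icc.mpr zero_le_one) (Set.right_mem_Icc.mpr zero_le_one)
    zero_le_one
  have hc0 : c 0 = a := by simp [hc]
  have hc1 : c 1 = x := by simp [hc, hv]
  simp only [hhdef, hc0, hc1] at key
  have : f a - 0 ≤ f x - lam * ‖v‖ ^ 2 / 2 := by simpa using key
  nlinarith [this]

/-- Lower Bound of Objective Function: the average objective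
`F(x) = (1/|S|) Σ f_i(x)` is bounded below by
`(1/|S|) Σ [f_i(x_i*) + (λ_i/2)(‖x_i* − x_S*‖ − ‖x − x_S*‖)²]`,
where `x_S*` is the centroid of the local minimizers. -/
theorem stmt1 {d : ℕ} {ι : Type*} (S : Finset ι) (hS : S.Nonempty)
    (f : ι → EuclideanSpace ℝ (Fin d) → ℝ)
    (xstar : ι → EuclideanSpace ℝ (Fin d)) (lam : ι → ℝ)
    (x : EuclideanSpace ℝ (Fin d))
    (hlam : ∀ i ∈ S, 0 < lam i)
    (hf : ∀ i ∈ S, ContDiff ℝ 2 (f i))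
    (hgrad : ∀ i ∈ S, fderiv ℝ (f i) (xstar i) = 0)
    (hHess : ∀ i ∈ S, ∀ z ∈ segment ℝ (xstar i) x, ∀ v : EuclideanSpace ℝ (Fin d),
      lam i * ‖v‖ ^ 2 ≤ fderiv ℝ (fderiv ℝ (f i)) z v v) :
    (S.card : ℝ)⁻¹ * ∑ i ∈ S,
        (f i (xstar i) + lam i / 2 *
          (‖xstar i - (S.card : ℝ)⁻¹ • ∑ j ∈ S, xstar j‖
            - ‖x - (S.card : ℝ)⁻¹ • ∑ j ∈ S, xstar j‖) ^ 2)
      ≤ (S.card : ℝ)⁻¹ * ∑ i ∈ S, f i x := by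
  set ctr := (S.card : ℝ)⁻¹ • ∑ j ∈ S, xstar j with hctr
  have hinv : (0:ℝ) ≤ (S.card : ℝ)⁻¹ := by positivity
  apply mul_le_mul_of_nonneg_left _ hinv
  apply Finset.sum_le_sum
  intro i hi
  have hkey := strong_lower_bound (f i) (xstar i) x (lam i) (hf i hi) (hgrad i hi)
    (fun z hz => hHess i hi z hz (x - xstar i))
  have htri : |‖xstar i - ctr‖ - ‖x - ctr‖| ≤ ‖x - xstar i‖ := by
    have := abs_norm_sub_norm_le (xstar i - ctr) (x - ctr)
    have heq : (xstar i - ctr) - (x - ctr) = xstar i - x := by abel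
    rw [heq, norm_sub_rev (xstar i) x] at this
    exact this
  have hsq : (‖xstar i - ctr‖ - ‖x - ctr‖) ^ 2 ≤ ‖x - xstar i‖ ^ 2 := by
    rw [← sq_abs]
    exact pow_le_pow_left₀ (abs_nonneg _) htri 2
  have hl := (hlam i hi).le
  nlinarith [hkey, hsq]
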